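/- Loss correction under 1-dependent corruption: let τ be a Markov kernel from Y to X and λ a Markov kernel from X to Y, and let κ† be the Markov kernel from X × Y to X × Y sending (x̃, ỹ) to the product measure τ(ỹ) ×ₘ λ(x̃). Let P̃ and P be probability measures on X × Y such that P = P̃ ∘ κ†. Then for every hypothesis h, ∫_{X×Y} ℓ(h(x), y) dP(x, y) = ∫_{X×Y} [ ∫_{𝒫(Y)} ( ∑_{y ∈ Y} λ(x̃)({y}) · ℓ(u, y) ) d((τ(ỹ)).map h)(u) ] dP̃(x̃, ỹ), where (τ(ỹ)).map h denotes the pushforward of the measure τ(ỹ) on X under h; i.e. the corrected loss ℓ̃(h, x̃, ỹ) := E_{u ∼ (τ # h)(ỹ)}[ ∑_{y ∈ Y} λ(x̃)({y}) · ℓ(u, y) ] preserves the risk of every hypothesis. -/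

import Mathlib

open MeasureTheory ProbabilityTheory

/-- A hypothesis: a measurable map from `X` to probability measures on `Y`
(equivalently, a Markov kernel from `X` to `Y`). -/
structure Hypothesis (X Y : Type*) [MeasurableSpace X] [MeasurableSpace Y] where
  toFun : X → Measure Y
  measurable' : Measurable toFun
  prob' : ∀ x, IsProbabilityMeasure (toFun x)

/-!
Writing `κ† = τ ⊗ λ`, the clean risk `∫ ℓ(h x, y) dP` equals `∫ (∫ ℓ(h x, y) dκ†(x̃, ỹ)) dP̃`
because `P = P̃ ∘ κ†`. The inner integral is over the product measure `τ(ỹ) ×ₘ λ(x̃)`, so by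
Fubini it is `∫ (∑_y λ(x̃){y} ℓ(h x, y)) dτ(ỹ)(x)`, and pushing `τ(ỹ)` forward along `h` turns it
into the corrected loss. The loss being bounded makes every integral involved finite.
-/

section Integration

variable {α β E : Type*} [MeasurableSpace α] [MeasurableSpace β]
  [NormedAddCommGroup E] [NormedSpace ℝ E]

theorem MeasureTheory.Measure.integral_comp {μ : Measure α} [SFinite μ]
    (κ : Kernel α β) [IsSFiniteKernel κ] {f : β → E} (hf : Integrable f (κ ∘ₘ μ)) :
    ∫ b, f b ∂(κ ∘ₘ μ) = ∫ a, ∫ b, f b ∂(κ a) ∂μ := by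
  have hf_snd : AEStronglyMeasurable f (μ ⊗ₘ κ).snd := by
    rw [Measure.snd_compProd]; exact hf.aestronglyMeasurable
  rw [← Measure.snd_compProd, Measure.snd, integral_map measurable_snd.aemeasurable hf_snd,
    Measure.integral_compProd ((integrable_compProd_snd_iff hf.aestronglyMeasurable).mpr hf)]

theorem MeasureTheory.integral_prod_eq_integral_sum_right [CompleteSpace E] [Fintype β]
    [MeasurableSingletonClass β] {ν : Measure α} [SFinite ν] {ρ : Measure β} [IsFiniteMeasure ρ]
    {f : α × β → E} (hf : Integrable f (ν.prod ρ)) :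
    ∫ z, f z ∂(ν.prod ρ) = ∫ a, ∑ b, ρ.real {b} • f (a, b) ∂ν := by
  rw [integral_prod f hf]
  simp_rw [integral_fintype Integrable.of_finite]

end Integration

/-- The kernel `κ†` of the paper. -/
noncomputable def oneDependentKernel {X Y : Type*} [MeasurableSpace X] [MeasurableSpace Y]
    (τ : Kernel Y X) (lam : Kernel X Y) : Kernel (X × Y) (X × Y) :=
  τ.comap Prod.snd measurable_snd ×ₖ lam.comap Prod.fst measurable_fst

section OneDependentKernel

variable {X Y : Type*} [MeasurableSpace X] [MeasurableSpace Y] (τ : Kernel Y X) (lam : Kernel X Y)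

theorem oneDependentKernel_apply [IsSFiniteKernel τ] [IsSFiniteKernel lam] (p : X × Y) :
    oneDependentKernel τ lam p = (τ p.2).prod (lam p.1) := by
  simp [oneDependentKernel, Kernel.prod_apply]

instance [IsMarkovKernel τ] [IsMarkovKernel lam] : IsMarkovKernel (oneDependentKernel τ lam) := by
  unfold oneDependentKernel; infer_instance

end OneDependentKernel

theorem loss_correction_one_dependent_general {X Y : Type*} [MeasurableSpace X]
    [Fintype Y] [MeasurableSpace Y] [MeasurableSingletonClass Y]
    (loss : Measure Y → Y → ℝ)
    (hmeas : Measurable fun p : Measure Y × Y => loss p.1 p.2)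
    (hnonneg : ∀ p y, 0 ≤ loss p y)
    (C : ℝ) (hbdd : ∀ p y, loss p y ≤ C)
    (τ : Kernel Y X) [IsMarkovKernel τ]
    (lam : Kernel X Y) [IsMarkovKernel lam]
    (P Pt : Measure (X × Y)) [IsProbabilityMeasure Pt]
    (hclean : P = Pt.bind fun p : X × Y => (τ p.2).prod (lam p.1)) :
    ∀ h : Hypothesis X Y,
      ∫ z : X × Y, loss (h.toFun z.1) z.2 ∂P =
        ∫ z : X × Y,
          (∫ u, ∑ y : Y, (lam z.1 {y}).toReal * loss u y ∂((τ z.2).map h.toFun)) ∂Pt := by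
  intro h
  have hloss_meas : Measurable fun z : X × Y => loss (h.toFun z.1) z.2 :=
    hmeas.comp ((h.measurable'.comp measurable_fst).prodMk measurable_snd)
  have hloss_int (μ : Measure (X × Y)) [IsFiniteMeasure μ] :
      Integrable (fun z => loss (h.toFun z.1) z.2) μ :=
    .of_bound hloss_meas.aestronglyMeasurable C <| ae_of_all _ fun z => by
      rw [Real.norm_of_nonneg (hnonneg _ _)]; exact hbdd _ _
  have hP : P = Pt.bind (oneDependentKernel τ lam) := by
    rw [hclean]; congr with p : 1; exact (oneDependentKernel_apply τ lam p).symm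
  rw [hP, Measure.integral_comp _ (hloss_int _)]
  refine integral_congr_ae (ae_of_all _ fun z => ?_)
  dsimp only
  have hcorrected_meas : Measurable fun u => ∑ y, (lam z.1 {y}).toReal * loss u y :=
    Finset.measurable_sum _ fun y _ => measurable_const.mul hmeas.of_uncurry_right
  rw [oneDependentKernel_apply, integral_prod_eq_integral_sum_right (hloss_int _),
    integral_map h.measurable'.aemeasurable hcorrected_meas.aestronglyMeasurable]
  simp only [measureReal_def, smul_eq_mul]

/-- Loss correction under 1-dependent corruption: if the cleaning kernel is
`κ† = τ ⊗ λ` with `τ : Y ⇝ X` and `λ : X ⇝ Y`, then the corrected loss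
`ℓ̃(h, x̃, ỹ) := E_{u ∼ (τ # h)(ỹ)}[ ∑_y λ(x̃)({y}) ℓ(u, y) ]`
preserves the risk of every hypothesis. -/
theorem loss_correction_one_dependent {X Y : Type*} [MeasurableSpace X]
    [Fintype Y] [Nonempty Y] [MeasurableSpace Y] [MeasurableSingletonClass Y]
    (loss : Measure Y → Y → ℝ)
    (hmeas : Measurable fun p : Measure Y × Y => loss p.1 p.2)
    (hnonneg : ∀ p y, 0 ≤ loss p y)
    (C : ℝ) (hbdd : ∀ p y, loss p y ≤ C)
    (τ : Kernel Y X) [IsMarkovKernel τ]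
    (lam : Kernel X Y) [IsMarkovKernel lam]
    (P Pt : Measure (X × Y)) [IsProbabilityMeasure P] [IsProbabilityMeasure Pt]
    (hclean : P = Pt.bind fun p : X × Y => (τ p.2).prod (lam p.1)) :
    ∀ h : Hypothesis X Y,
      ∫ z : X × Y, loss (h.toFun z.1) z.2 ∂P =
        ∫ z : X × Y,
          (∫ u, ∑ y : Y, (lam z.1 {y}).toReal * loss u y ∂((τ z.2).map h.toFun)) ∂Pt :=
  loss_correction_one_dependent_general loss hmeas hnonneg C hbdd τ lam P Pt hclean
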